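/- arXiv:1807.03529 — 7 statements merged into one kernel-verified Lean document; each statement's English description precedes it below -/
import Mathlib

section
/- Let R be a commutative ring in which 2 is invertible (or more generally whose residue characteristic is not 2), let Γ be a group with index-2 subgroup Δ, let c ∈ Γ \ Δ satisfy c² = 1, and let ⟨,⟩ : Rⁿ × Rⁿ → R be a perfect bilinear pairing satisfying ⟨r(δ)x, r(cδc⁻¹)y⟩ = μ(δ)⟨x,y⟩ for a representation r : Δ → GLₙ(R) and character μ : Γ → R^×, together with ⟨x, r(c²)y⟩ = -μ(c)⟨y,x⟩. If n is odd and r mod the maximal ideal is absolutely irreducible (so the pairing is necessarily symmetric), then μ(c) = -1. -/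
/-- Lemma "odd implies odd": let `k` be an (algebraically closed) field of characteristic
different from `2`, `Γ` a group with index-2 subgroup `Δ`, `c ∈ Γ \ Δ` with `c² = 1`, and
`⟨,⟩ : kⁿ × kⁿ → k` a perfect (nondegenerate) pairing satisfying
`⟨r(δ)x, r(cδc⁻¹)y⟩ = μ(δ)⟨x,y⟩` for a representation `r : Δ → GLₙ(k)` and a character
`μ : Γ → kˣ`, together with `⟨x, y⟩ = ⟨x, r(c²)y⟩ = -μ(c)⟨y,x⟩`.  If `n` is odd and `r` is
absolutely irreducible, then `μ(c) = -1`. -/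
theorem stmt_0
    {k : Type*} [Field k] [IsAlgClosed k] (hchar : (2 : k) ≠ 0)
    {Γ : Type*} [Group Γ] (Δ : Subgroup Γ) (hΔ : Δ.index = 2)
    (c : Γ) (hc : c ∉ Δ) (hc2 : c ^ 2 = 1)
    {n : ℕ} (hn : Odd n)
    (ρ : Representation k ↥Δ (Fin n → k)) (μ : Γ →* kˣ)
    (B : (Fin n → k) →ₗ[k] (Fin n → k) →ₗ[k] k)
    (hBleft : ∀ x, (∀ y, B x y = 0) → x = 0)
    (hBright : ∀ y, (∀ x, B x y = 0) → y = 0)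
    (hequiv : ∀ (δ δ' : ↥Δ) (x y : Fin n → k),
      c * (δ : Γ) * c⁻¹ = (δ' : Γ) → B (ρ δ x) (ρ δ' y) = (μ (δ : Γ) : k) * B x y)
    (hskew : ∀ x y, B x y = -((μ c : k)) * B y x)
    (hirr : ∀ W : Submodule k (Fin n → k),
      (∀ (δ : ↥Δ) (x : Fin n → k), x ∈ W → ρ δ x ∈ W) → W = ⊥ ∨ W = ⊤) :
    (μ c : k) = -1 := by
  set a : k := (μ c : k) with ha
  have hn1 : 0 < n := hn.pos
  -- B is nonzero
  obtain ⟨x, y, hxy⟩ : ∃ x y, B x y ≠ 0 := by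
    by_contra h
    push_neg at h
    have h0 : (Pi.single (⟨0, hn1⟩ : Fin n) (1 : k)) = 0 :=
      hBleft _ fun y => h _ y
    have := congrFun h0 ⟨0, hn1⟩
    simp at this
  -- a² = 1
  have hsq : a * a = 1 := by
    have h1 := hskew x y
    rw [hskew y x] at h1
    have h2 : (a * a - 1) * B x y = 0 := by linear_combination -h1
    rcases mul_eq_zero.mp h2 with h | h
    · linear_combination h
    · exact absurd h hxy
  rcases mul_self_eq_one_iff.mp hsq with h1 | h1
  · exfalso
    have hBskew : ∀ u v, B u v = - B v u := by
      intro u v; rw [hskew u v, h1]; ring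
    set M := LinearMap.toMatrix₂' k B with hM
    have hBM : B = Matrix.toLinearMap₂' k M := (Matrix.toLinearMap₂'_toMatrix' (R := k) B).symm
    have hMT : M.transpose = -M := by
      ext i j
      simp only [Matrix.transpose_apply, Matrix.neg_apply, hM, LinearMap.toMatrix₂'_apply]
      exact hBskew _ _
    have hdet : M.det = 0 := by
      have := M.det_transpose
      rw [hMT, Matrix.det_neg, Fintype.card_fin, hn.neg_one_pow] at this
      have h2 : (2 : k) * M.det = 0 := by linear_combination -this
      exact (mul_eq_zero.mp h2).resolve_left hchar
    obtain ⟨v, hv0, hv⟩ := Matrix.exists_mulVec_eq_zero_iff.mpr hdet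
    refine hv0 (hBright v fun u => ?_)
    rw [hBM, Matrix.toLinearMap₂'_apply', hv, dotProduct_zero]
  · exact h1
end

section
/- Let V and W be irreducible representations of a group G over an algebraically closed field k of characteristic zero, and suppose V remains irreducible after restriction to every finite-index subgroup of G (i.e. V is strongly irreducible). Then, up to scaling, there is at most one nonzero bilinear G-equivariant pairing W × V → k(μ), where μ ranges over all characters of G; i.e., the character μ for which a nonzero pairing exists is unique, and for that μ the pairing is unique up to scalar. -/
/-- Let `V`, `W` be irreducible representations of a group `G` over an algebraically closed
field `k` of characteristic zero, with `V` strongly irreducible (irreducible after restriction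
to every finite-index subgroup).  Then, up to scaling, there is at most one nonzero bilinear
`G`-equivariant pairing `W × V → k(μ)` as `μ` ranges over all characters of `G`: the
character `μ` is unique, and the pairing is unique up to scalar. -/
theorem stmt_3
    {k G V W : Type*} [Field k] [IsAlgClosed k] [CharZero k] [Group G]
    [AddCommGroup V] [Module k V] [FiniteDimensional k V]
    [AddCommGroup W] [Module k W] [FiniteDimensional k W]
    (ρV : Representation k G V) (ρW : Representation k G W)
    (hWirr : ∀ U : Submodule k W, (∀ g, ∀ w ∈ U, ρW g w ∈ U) → U = ⊥ ∨ U = ⊤)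
    (hVstrong : ∀ H : Subgroup G, H.FiniteIndex →
      ∀ U : Submodule k V, (∀ h : ↥H, ∀ v ∈ U, ρV (h : G) v ∈ U) → U = ⊥ ∨ U = ⊤)
    (μ μ' : G →* kˣ)
    (B B' : W →ₗ[k] V →ₗ[k] k) (hB : B ≠ 0) (hB' : B' ≠ 0)
    (hBe : ∀ g w v, B (ρW g w) (ρV g v) = (μ g : k) * B w v)
    (hB'e : ∀ g w v, B' (ρW g w) (ρV g v) = (μ' g : k) * B' w v) :
    μ = μ' ∧ ∃ a : k, B' = a • B := by
  classical
  -- basic nontriviality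
  obtain ⟨w₀, v₀, hwv₀⟩ : ∃ w v, B w v ≠ 0 := by
    by_contra h
    push_neg at h
    exact hB (by ext w v; simpa using h w v)
  have hVnt : Nontrivial V := ⟨v₀, 0, fun h => hwv₀ (by rw [h]; simp)⟩
  -- inverses of the group action
  have hρVinv : ∀ (g : G) (v : V), ρV g⁻¹ (ρV g v) = v := by
    intro g v
    have h1 : ρV g⁻¹ * ρV g = 1 := by rw [← map_mul, inv_mul_cancel, map_one]
    calc ρV g⁻¹ (ρV g v) = (ρV g⁻¹ * ρV g) v := rfl
      _ = v := by rw [h1]; rfl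
  have hρWinv : ∀ (g : G) (w : W), ρW g (ρW g⁻¹ w) = w := by
    intro g w
    have h1 : ρW g * ρW g⁻¹ = 1 := by rw [← map_mul, mul_inv_cancel, map_one]
    calc ρW g (ρW g⁻¹ w) = (ρW g * ρW g⁻¹) w := rfl
      _ = w := by rw [h1]; rfl
  -- rearranged equivariance
  have hBe' : ∀ g w v, B w (ρV g v) = (μ g : k) * B (ρW g⁻¹ w) v := by
    intro g w v
    conv_lhs => rw [← hρWinv g w]
    exact hBe g (ρW g⁻¹ w) v
  have hB'e' : ∀ g w v, B' w (ρV g v) = (μ' g : k) * B' (ρW g⁻¹ w) v := by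
    intro g w v
    conv_lhs => rw [← hρWinv g w]
    exact hB'e g (ρW g⁻¹ w) v
  -- the right kernel of an equivariant pairing is trivial
  have hrker : ∀ (C : W →ₗ[k] V →ₗ[k] k) (ν : G →* kˣ),
      (∀ g w v, C w (ρV g v) = (ν g : k) * C (ρW g⁻¹ w) v) → C ≠ 0 →
      LinearMap.ker C.flip = ⊥ := by
    intro C ν hCe hC
    have hinv : ∀ h : ↥(⊤ : Subgroup G), ∀ v ∈ LinearMap.ker C.flip,
        ρV (h : G) v ∈ LinearMap.ker C.flip := by
      rintro ⟨g, -⟩ v hv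
      rw [LinearMap.mem_ker] at hv ⊢
      ext w
      have hvw : C (ρW g⁻¹ w) v = 0 := by
        have := LinearMap.congr_fun hv (ρW g⁻¹ w)
        simpa using this
      simp only [LinearMap.flip_apply, hCe g w v, hvw, mul_zero, LinearMap.zero_apply]
    rcases hVstrong ⊤ inferInstance (LinearMap.ker C.flip) hinv with h | h
    · exact h
    · exfalso
      apply hC
      ext w v
      have : C.flip v = 0 := by rw [← LinearMap.mem_ker, h]; trivial
      simpa using LinearMap.congr_fun this w
  have hBflipker : LinearMap.ker B.flip = ⊥ := hrker B μ hBe' hB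
  have hB'flipker : LinearMap.ker B'.flip = ⊥ := hrker B' μ' hB'e' hB'
  have hBflipinj : Function.Injective B.flip := LinearMap.ker_eq_bot.mp hBflipker
  -- the left kernel of B is trivial
  have hlker : LinearMap.ker B = ⊥ := by
    have hinv : ∀ g, ∀ w ∈ LinearMap.ker B, ρW g w ∈ LinearMap.ker B := by
      intro g w hw
      rw [LinearMap.mem_ker] at hw ⊢
      ext v
      have h1 : B (ρW g w) (ρV g (ρV g⁻¹ v)) = (μ g : k) * B w (ρV g⁻¹ v) :=
        hBe g w (ρV g⁻¹ v)
      rw [hw] at h1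
      have h2 : ρV g (ρV g⁻¹ v) = v := by
        conv_rhs => rw [← hρVinv g⁻¹ v, inv_inv]
      rw [h2] at h1
      simpa using h1
    rcases hWirr (LinearMap.ker B) hinv with h | h
    · exact h
    · exfalso
      apply hwv₀
      have : B w₀ = 0 := by rw [← LinearMap.mem_ker, h]; trivial
      rw [this]; rfl
  -- dimension count: B.flip : V → Dual W is bijective
  have hdim1 : Module.finrank k V ≤ Module.finrank k W := by
    have := LinearMap.finrank_le_finrank_of_injective hBflipinj
    rwa [Subspace.dual_finrank_eq] at this
  have hdim2 : Module.finrank k W ≤ Module.finrank k V := by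
    have := LinearMap.finrank_le_finrank_of_injective (LinearMap.ker_eq_bot.mp hlker)
    rwa [Subspace.dual_finrank_eq] at this
  have hdim : Module.finrank k V = Module.finrank k (Module.Dual k W) := by
    rw [Subspace.dual_finrank_eq]; exact le_antisymm hdim1 hdim2
  have hBflipsurj : Function.Surjective B.flip :=
    (LinearMap.injective_iff_surjective_of_finrank_eq_finrank hdim).mp hBflipinj
  set e : V ≃ₗ[k] Module.Dual k W :=
    LinearEquiv.ofBijective B.flip ⟨hBflipinj, hBflipsurj⟩ with he
  -- the intertwiner T
  set T : V →ₗ[k] V := e.symm.toLinearMap ∘ₗ B'.flip with hTdef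
  have hT : ∀ w v, B w (T v) = B' w v := by
    intro w v
    have h1 : e (T v) = B'.flip v := by
      simp only [hTdef, LinearMap.comp_apply, LinearEquiv.coe_coe]
      exact e.apply_symm_apply _
    have h2 : e (T v) = B.flip (T v) := rfl
    rw [h2] at h1
    exact LinearMap.congr_fun h1 w
  have hTinj : Function.Injective T := by
    intro x y hxy
    apply LinearMap.ker_eq_bot.mp hB'flipker
    have : e (T x) = e (T y) := by rw [hxy]
    simp only [hTdef, LinearMap.comp_apply, LinearEquiv.coe_coe, e.apply_symm_apply] at this
    exact this
  -- the character χ = μ'/μ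
  set χ : G →* kˣ := μ' / μ with hχdef
  have hχval : ∀ g, (χ g : k) * (μ g : k) = (μ' g : k) := by
    intro g
    have : χ g * μ g = μ' g := by
      simp only [hχdef, MonoidHom.div_apply]
      rw [div_eq_mul_inv, inv_mul_cancel_right]
    exact_mod_cast congrArg (Units.val) this
  have hμne : ∀ g, (μ g : k) ≠ 0 := fun g => (μ g).ne_zero
  -- T intertwines ρV up to χ
  have hcomm : ∀ g v, T (ρV g v) = (χ g : k) • ρV g (T v) := by
    intro g v
    apply hBflipinj
    ext w
    rw [LinearMap.map_smul]
    simp only [LinearMap.flip_apply, LinearMap.smul_apply, smul_eq_mul]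
    rw [hT w (ρV g v), hB'e' g w v, hBe' g w (T v), hT (ρW g⁻¹ w) v, ← hχval g]
    ring
  -- determinant argument: χ g has finite order n
  set n := Module.finrank k V with hn
  have hnpos : 0 < n := Module.finrank_pos
  have hdetT : LinearMap.det T ≠ 0 := by
    intro h
    have := LinearMap.bot_lt_ker_of_det_eq_zero h
    rw [LinearMap.ker_eq_bot.mpr hTinj] at this
    exact lt_irrefl _ this
  have hdetρ : ∀ g, LinearMap.det (ρV g : V →ₗ[k] V) ≠ 0 := by
    intro g h
    have hinj : Function.Injective (ρV g : V →ₗ[k] V) := by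
      intro x y hxy
      have := congrArg (ρV g⁻¹) hxy
      rwa [hρVinv, hρVinv] at this
    have := LinearMap.bot_lt_ker_of_det_eq_zero h
    rw [LinearMap.ker_eq_bot.mpr hinj] at this
    exact lt_irrefl _ this
  have hχn : ∀ g, (χ g : k) ^ n = 1 := by
    intro g
    have h1 : T ∘ₗ (ρV g : V →ₗ[k] V) = (χ g : k) • ((ρV g : V →ₗ[k] V) ∘ₗ T) := by
      ext v
      simpa using hcomm g v
    have h2 := congrArg LinearMap.det h1
    rw [LinearMap.det_comp, LinearMap.det_smul, LinearMap.det_comp] at h2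
    have hne : LinearMap.det (ρV g : V →ₗ[k] V) * LinearMap.det T ≠ 0 :=
      mul_ne_zero (hdetρ g) hdetT
    refine mul_right_cancel₀ hne ?_
    rw [one_mul, ← h2]
    ring
  -- the kernel of χ into the roots of unity has finite index
  haveI : NeZero n := ⟨hnpos.ne'⟩
  have hχmem : ∀ g, χ g ∈ rootsOfUnity n k := by
    intro g
    rw [mem_rootsOfUnity]
    ext
    push_cast
    exact hχn g
  set χ' : G →* (rootsOfUnity n k) := χ.codRestrict (rootsOfUnity n k) hχmem with hχ'def
  haveI : Finite (rootsOfUnity n k) := inferInstance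
  haveI : χ'.ker.FiniteIndex := Subgroup.finiteIndex_ker χ'
  -- Schur: T has an eigenvalue, and the eigenspace is invariant under ker χ'
  obtain ⟨c, hc⟩ := Module.End.exists_eigenvalue (T : Module.End k V)
  have hinv : ∀ h : ↥χ'.ker, ∀ v ∈ Module.End.eigenspace (T : Module.End k V) c,
      ρV (h : G) v ∈ Module.End.eigenspace (T : Module.End k V) c := by
    rintro ⟨g, hg⟩ v hv
    rw [Module.End.mem_eigenspace_iff] at hv ⊢
    have hχg : (χ g : k) = 1 := by
      rw [MonoidHom.mem_ker] at hg
      have : χ g = 1 := by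
        have := congrArg (Subtype.val) hg
        simpa [hχ'def] using this
      rw [this]; rfl
    have := hcomm g v
    rw [hχg, one_smul, hv] at this
    rw [this, map_smul]
  rcases hVstrong χ'.ker inferInstance _ hinv with h | h
  · exact absurd h hc
  have hTc : ∀ v, T v = c • v := by
    intro v
    have : v ∈ Module.End.eigenspace (T : Module.End k V) c := by rw [h]; trivial
    rwa [Module.End.mem_eigenspace_iff] at this
  -- c ≠ 0
  obtain ⟨v₁, hv₁⟩ := exists_ne (0 : V)
  have hc0 : c ≠ 0 := by
    intro h0
    apply hv₁
    apply hTinj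
    rw [hTc v₁, h0, zero_smul, map_zero]
  -- χ = 1, hence μ = μ'
  have hχ1 : ∀ g, (χ g : k) = 1 := by
    intro g
    have h1 := hcomm g v₁
    rw [hTc (ρV g v₁), hTc v₁, map_smul, smul_smul] at h1
    have hz : ρV g v₁ ≠ 0 := by
      intro h0
      apply hv₁
      rw [← hρVinv g v₁, h0, map_zero]
    have hcc : c = (χ g : k) * c := smul_left_injective k hz h1
    have h3 : (χ g : k) * c = 1 * c := by rw [one_mul]; exact hcc.symm
    exact mul_right_cancel₀ hc0 h3
  constructor
  · refine MonoidHom.ext fun g => Units.ext ?_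
    have h4 := hχval g
    rw [hχ1 g, one_mul] at h4
    exact h4
  · refine ⟨c, ?_⟩
    ext w v
    have h1 : B' w v = B w (T v) := (hT w v).symm
    rw [h1, hTc v, map_smul]
    simp [mul_comm]
end

section
/- Let H be a reductive linear algebraic group over an algebraically closed field of characteristic zero with a faithful irreducible linear representation V whose restriction to the identity component H° remains irreducible. Let Z_H denote the center of H. Then there is an injective homomorphism H/(Z_H · H°) → Out(H°,der), the outer automorphism group of the derived subgroup of H°. In particular, if Z_H is connected, the component group of H injects into Out(H°,der). -/
/-- Let `H` be a (reductive) group with a faithful irreducible finite-dimensional linear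
representation `V` over an algebraically closed field of characteristic zero, whose
restriction to the "identity component" `Hc` (a normal subgroup satisfying the reductivity
property `Hc = [Hc,Hc] · Z(Hc)`) remains irreducible.  Then the natural map
`H/(Z_H · Hc) → Out([Hc,Hc])` is injective: any `h ∈ H` whose conjugation action on the
derived subgroup `[Hc,Hc]` is an inner automorphism lies in `Z_H ⊔ Hc`. -/
theorem stmt_10
    {k H V : Type*} [Field k] [IsAlgClosed k] [CharZero k] [Group H]
    [AddCommGroup V] [Module k V] [FiniteDimensional k V]
    (ρ : Representation k H V) (hfaith : Function.Injective ρ)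
    (Hc : Subgroup H) (hHcn : Hc.Normal)
    (hirr : ∀ U : Submodule k V, (∀ g : H, ∀ v ∈ U, ρ g v ∈ U) → U = ⊥ ∨ U = ⊤)
    (hirr0 : ∀ U : Submodule k V, (∀ g ∈ Hc, ∀ v ∈ U, ρ g v ∈ U) → U = ⊥ ∨ U = ⊤)
    (hred : ∀ h ∈ Hc, ∃ d ∈ ⁅Hc, Hc⁆, ∃ z ∈ Subgroup.centralizer (Hc : Set H), h = d * z) :
    ∀ h : H, (∃ d ∈ ⁅Hc, Hc⁆, ∀ x ∈ ⁅Hc, Hc⁆, h * x * h⁻¹ = d * x * d⁻¹) →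
      h ∈ Subgroup.center H ⊔ Hc := by
  rintro h ⟨d, hd, hcomm⟩
  have hdHc : d ∈ Hc := by
    have hle : ⁅Hc, Hc⁆ ≤ Hc := by
      rw [Subgroup.commutator_le]
      intro g hg h' hh'
      exact Hc.mul_mem (Hc.mul_mem (Hc.mul_mem hg hh') (Hc.inv_mem hg)) (Hc.inv_mem hh')
    exact hle hd
  rcases subsingleton_or_nontrivial V with hV | hV
  · have h1 : h = 1 := hfaith (LinearMap.ext fun v => Subsingleton.elim _ _)
    rw [h1]; exact one_mem _
  -- Schur's lemma: any endomorphism commuting with the (irreducible) Hc-action is scalar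
  have schur : ∀ f : Module.End k V, (∀ g ∈ Hc, f * ρ g = ρ g * f) →
      ∃ c : k, f = c • (1 : Module.End k V) := by
    intro f hf
    obtain ⟨c, hc⟩ := Module.End.exists_eigenvalue f
    refine ⟨c, ?_⟩
    have hU : ∀ g ∈ Hc, ∀ v ∈ f.eigenspace c, ρ g v ∈ f.eigenspace c := by
      intro g hg v hv
      rw [Module.End.mem_eigenspace_iff] at hv ⊢
      have e := congrArg (fun φ : Module.End k V => φ v) (hf g hg)
      simp only [Module.End.mul_apply] at e
      rw [e, hv, map_smul]
    rcases hirr0 _ hU with hbot | htop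
    · exact absurd hbot hc
    · ext v
      have hv : v ∈ f.eigenspace c := htop ▸ Submodule.mem_top
      rw [Module.End.mem_eigenspace_iff] at hv
      simpa using hv
  -- elements of the centralizer of Hc act by scalars
  have hz_scalar : ∀ z ∈ Subgroup.centralizer (Hc : Set H),
      ∃ c : k, (ρ z : Module.End k V) = c • 1 := by
    intro z hz
    apply schur
    intro g hg
    rw [← map_mul, ← map_mul, (Subgroup.mem_centralizer_iff.mp hz g hg)]
  set g := d⁻¹ * h with hg_def
  have hgx : ∀ x ∈ ⁅Hc, Hc⁆, g * x = x * g := by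
    intro x hx
    have e := congrArg (fun y => d⁻¹ * y * h) (hcomm x hx)
    simp only [hg_def, mul_assoc, inv_mul_cancel_left] at e ⊢
    simpa [mul_assoc] using e
  have hdg : h = d * g := by rw [hg_def, mul_inv_cancel_left]
  clear_value g
  clear hg_def
  have hgHc : ∀ h' ∈ Hc, (ρ g : Module.End k V) * ρ h' = ρ h' * ρ g := by
    intro h' hh'
    obtain ⟨d', hd', z, hz, rfl⟩ := hred h' hh'
    obtain ⟨c, hcz⟩ := hz_scalar z hz
    have h1 : (ρ g : Module.End k V) * ρ d' = ρ d' * ρ g := by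
      rw [← map_mul, ← map_mul, hgx d' hd']
    rw [map_mul, hcz]
    simp only [mul_smul_comm, smul_mul_assoc, mul_one, one_mul]
    rw [h1]
  obtain ⟨c, hgc⟩ := schur (ρ g) hgHc
  have hgz : g ∈ Subgroup.center H := by
    rw [Subgroup.mem_center_iff]
    intro a
    apply hfaith
    rw [map_mul, map_mul, hgc]
    simp [mul_smul_comm, smul_mul_assoc]
  rw [hdg]
  exact Subgroup.mul_mem _ (Subgroup.mem_sup_right hdHc) (Subgroup.mem_sup_left hgz)
end

section
/- Let A ⊆ GL(V) and B ⊆ GL(V') be images of a group Γ acting absolutely irreducibly on finite-dimensional spaces V, V' over a field of characteristic p, with dim V, dim V' > 2(p+1), and suppose the projective images of Γ on V and V' are disjoint (Γ surjects onto ℙG × ℙG'). If both A and B satisfy the spanning condition that their semisimple elements span ad(V) ⊗ k̄ and ad(V') ⊗ k̄ respectively, then the image of Γ on V ⊗ V' satisfies the analogous spanning condition: its semisimple elements span ad(V ⊗ V') ⊗ k̄. -/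
/-!
Over a perfect field the tensor product `g ⊗ g'` of semisimple endomorphisms is semisimple,
being the product of the commuting semisimple maps `g ⊗ 1` and `1 ⊗ g'`.
For semisimple `g = ρ h`, `g' = ρ' h'`, disjointness of the projective images provides `γ` with
`(ρ ⊗ ρ') γ` a nonzero multiple of `g ⊗ g'`, so `g ⊗ g'` lies in the span of the semisimple
elements of the image on `V ⊗ V'`. As `g` and `g'` range over spanning sets of `End V` and
`End V'`, the `g ⊗ g'` span `End V ⊗ End V' = End (V ⊗ V')`.
-/

open TensorProduct

namespace Module.End

variable {K M N : Type*} [Field K] [AddCommGroup M] [Module K M] [AddCommGroup N] [Module K N]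

theorem IsSemisimple.map_algHom [FiniteDimensional K M] {f : End K M}
    (hf : f.IsSemisimple) (φ : End K M →ₐ[K] End K N) : (φ f).IsSemisimple :=
  isSemisimple_of_squarefree_aeval_eq_zero hf.minpoly_squarefree <| by
    rw [Polynomial.aeval_algHom_apply, minpoly.aeval, map_zero]

theorem IsSemisimple.tensorProduct_map [PerfectField K] [FiniteDimensional K M]
    [FiniteDimensional K N] {f : End K M} {f' : End K N}
    (hf : f.IsSemisimple) (hf' : f'.IsSemisimple) :
    IsSemisimple (TensorProduct.map f f') := by
  have hcomm : Commute (f.rTensor N) (f'.lTensor M) := by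
    rw [commute_iff_eq, mul_eq_comp, mul_eq_comp, LinearMap.rTensor_comp_lTensor,
      LinearMap.lTensor_comp_rTensor]
  rw [← LinearMap.rTensor_comp_lTensor, ← mul_eq_comp]
  exact (hf.map_algHom (rTensorAlgHom K M N)).mul_of_commute hcomm
    (hf'.map_algHom (lTensorAlgHom K N M))

end Module.End

theorem Submodule.span_image2_tensorProduct_map_eq_top {K M N : Type*} [Field K]
    [AddCommGroup M] [Module K M] [FiniteDimensional K M]
    [AddCommGroup N] [Module K N] [FiniteDimensional K N]
    {S : Set (Module.End K M)} {S' : Set (Module.End K N)}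
    (hS : span K S = ⊤) (hS' : span K S' = ⊤) :
    span K (Set.image2 (fun f f' => (TensorProduct.map f f' : Module.End K (M ⊗[K] N))) S S')
      = ⊤ := by
  have hbil : mapBilinear (RingHom.id K) M N M N =
      (TensorProduct.mk K _ _).compr₂ (homTensorHomMap (RingHom.id K) M N M N) := rfl
  have hsurj : Function.Surjective (homTensorHomMap (RingHom.id K) M N M N) := by
    rw [← homTensorHomEquiv_toLinearMap]
    exact (homTensorHomEquiv K M N M N).surjective
  have hspan := map₂_span_span K (mapBilinear (RingHom.id K) M N M N) S S'
  simp only [mapBilinear_apply] at hspan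
  rw [← hspan, hS, hS', hbil, ← map_map₂,
    map₂_mk_top_top_eq_top, map_top, LinearMap.range_eq_top.mpr hsurj]

theorem Representation.tprod_apply_eq_smul_map {k G V V' : Type*} [Field k] [Monoid G]
    [AddCommGroup V] [Module k V] [AddCommGroup V'] [Module k V']
    {ρ : Representation k G V} {ρ' : Representation k G V'} {γ g g' : G} {c c' : k}
    (hc : ρ γ = c • ρ g) (hc' : ρ' γ = c' • ρ' g') :
    ρ.tprod ρ' γ = (c * c') • TensorProduct.map (ρ g) (ρ' g') := by
  rw [tprod_apply, hc, hc', map_smul_left, map_smul_right, smul_smul]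

theorem stmt_14_general
    {k Γ V V' : Type*} [Field k] [IsAlgClosed k] [Group Γ]
    [AddCommGroup V] [Module k V] [FiniteDimensional k V]
    [AddCommGroup V'] [Module k V'] [FiniteDimensional k V']
    (ρ : Representation k Γ V) (ρ' : Representation k Γ V')
    (hdisj : ∀ g g' : Γ, ∃ γ : Γ, (∃ c : kˣ, ∀ v, ρ γ v = (c : k) • ρ g v) ∧
      (∃ c' : kˣ, ∀ v, ρ' γ v = (c' : k) • ρ' g' v))
    (hspan : Submodule.span k
      {f : Module.End k V | (∃ g : Γ, ρ g = f) ∧ f.IsSemisimple} = ⊤)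
    (hspan' : Submodule.span k
      {f : Module.End k V' | (∃ g : Γ, ρ' g = f) ∧ f.IsSemisimple} = ⊤) :
    Submodule.span k
      {f : Module.End k (V ⊗[k] V') |
        (∃ γ : Γ, (ρ.tprod ρ') γ = f) ∧ f.IsSemisimple} = ⊤ := by
  rw [eq_top_iff, ← Submodule.span_image2_tensorProduct_map_eq_top hspan hspan',
    Submodule.span_le]
  rintro _ ⟨_, ⟨⟨g, rfl⟩, hg⟩, _, ⟨⟨g', rfl⟩, hg'⟩, rfl⟩
  dsimp only
  obtain ⟨γ, ⟨c, hc⟩, ⟨c', hc'⟩⟩ := hdisj g g'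
  have hγ := Representation.tprod_apply_eq_smul_map (LinearMap.ext hc) (LinearMap.ext hc')
  have hγ_semisimple : Module.End.IsSemisimple (ρ.tprod ρ' γ) := by
    rw [hγ]
    exact Module.End.IsSemisimple_smul _ (hg.tensorProduct_map hg')
  rw [SetLike.mem_coe,
    ← inv_smul_smul₀ (mul_ne_zero c.ne_zero c'.ne_zero) (TensorProduct.map (ρ g) (ρ' g')), ← hγ]
  exact Submodule.smul_mem _ _ (Submodule.subset_span ⟨⟨γ, rfl⟩, hγ_semisimple⟩)

/-- Let `V`, `V'` be absolutely irreducible representations of `Γ` over an (algebraically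
closed) field of characteristic `p`, of dimensions `> 2(p+1)`, with disjoint projective
images.  If the semisimple elements of the images of `Γ` on `V` and `V'` span `ad(V)` and
`ad(V')` respectively, then the semisimple elements of the image of `Γ` on `V ⊗ V'` span
`ad(V ⊗ V')`. -/
theorem stmt_14
    {k Γ V V' : Type*} [Field k] [IsAlgClosed k] [Group Γ]
    {p : ℕ} [Fact p.Prime] [CharP k p]
    [AddCommGroup V] [Module k V] [FiniteDimensional k V]
    [AddCommGroup V'] [Module k V'] [FiniteDimensional k V']
    (ρ : Representation k Γ V) (ρ' : Representation k Γ V')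
    (hdimV : 2 * (p + 1) < Module.finrank k V)
    (hdimV' : 2 * (p + 1) < Module.finrank k V')
    (hirr : ∀ U : Submodule k V, (∀ g, ∀ v ∈ U, ρ g v ∈ U) → U = ⊥ ∨ U = ⊤)
    (hirr' : ∀ U : Submodule k V', (∀ g, ∀ v ∈ U, ρ' g v ∈ U) → U = ⊥ ∨ U = ⊤)
    (hdisj : ∀ g g' : Γ, ∃ γ : Γ, (∃ c : kˣ, ∀ v, ρ γ v = (c : k) • ρ g v) ∧
      (∃ c' : kˣ, ∀ v, ρ' γ v = (c' : k) • ρ' g' v))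
    (hspan : Submodule.span k
      {f : Module.End k V | (∃ g : Γ, ρ g = f) ∧ f.IsSemisimple} = ⊤)
    (hspan' : Submodule.span k
      {f : Module.End k V' | (∃ g : Γ, ρ' g = f) ∧ f.IsSemisimple} = ⊤) :
    Submodule.span k
      {f : Module.End k (V ⊗[k] V') |
        (∃ γ : Γ, (ρ.tprod ρ') γ = f) ∧ f.IsSemisimple} = ⊤ :=
  stmt_14_general ρ ρ' hdisj hspan hspan'
end

section
/- Let r : G_{F_v} → GL_n(Q̄_ℓ) be a representation of the absolute Galois group of a p-adic field F_v which is potentially unramified (if ℓ does not equal the residue characteristic) or potentially crystalline (if it does), and suppose the restriction of the associated Weil–Deligne representation WD(r) to inertia I_{F_v} factors through a finite group of p-power order. If r is induced from a finite extension M_v/F_v whose Galois closure over F_v has degree prime to p, then M_v/F_v is unramified. -/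
/-- Let `ρ : G → GL_m(k)` be (the representation of) a local Galois group `G = G_{F_v}`, with
inertia subgroup `I`, such that the image `ρ(I)` is finite of `p`-power order (corresponding
to a potentially unramified/crystalline representation whose Weil–Deligne restriction to
inertia factors through a `p`-power order group).  Suppose `ρ` is induced from a subgroup
`H = G_{M_v}` (i.e. the space is an internal direct sum of translates of a nonzero
`H`-invariant subspace indexed by `G/H`) whose Galois closure has degree prime to `p`
(`H.normalCore` has index coprime to `p`).  Then `M_v/F_v` is unramified: `I ≤ H`. -/
theorem stmt_15
    {k : Type*} [Field k] {G : Type*} [Group G] {m p : ℕ} (hp : p.Prime)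
    (ρ : G →* Matrix.GeneralLinearGroup (Fin m) k)
    (I H : Subgroup G)
    (hppow : ∃ j : ℕ, Nat.card ↥(Subgroup.map ρ I) = p ^ j)
    (hcop : Nat.Coprime H.normalCore.index p)
    (hind : ∃ W : Submodule k (Fin m → k), W ≠ ⊥ ∧
      (∀ h ∈ H, ∀ w ∈ W,
        Matrix.mulVecLin ((ρ h : Matrix (Fin m) (Fin m) k)) w ∈ W) ∧
      iSupIndep (fun c : G ⧸ H =>
        Submodule.map (Matrix.mulVecLin ((ρ c.out : Matrix (Fin m) (Fin m) k))) W) ∧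
      (⨆ c : G ⧸ H,
        Submodule.map (Matrix.mulVecLin ((ρ c.out : Matrix (Fin m) (Fin m) k))) W) = ⊤) :
    I ≤ H := by
  obtain ⟨W, hWbot, hWinv, hindep, -⟩ := hind
  obtain ⟨j, hj⟩ := hppow
  -- abbreviation for the translates of `W`
  set f : G ⧸ H → Submodule k (Fin m → k) :=
    fun c => Submodule.map (Matrix.mulVecLin ((ρ c.out : Matrix (Fin m) (Fin m) k))) W with hf
  -- cancelation of matrices coming from inverse group elements
  have hcancel : ∀ (g : G) (w : Fin m → k),
      Matrix.mulVecLin ((ρ g⁻¹ : Matrix (Fin m) (Fin m) k))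
        (Matrix.mulVecLin ((ρ g : Matrix (Fin m) (Fin m) k)) w) = w := by
    intro g w
    rw [← LinearMap.comp_apply, ← Matrix.mulVecLin_mul, ← Units.val_mul, ← map_mul,
      inv_mul_cancel, map_one, Units.val_one, Matrix.mulVecLin_one, LinearMap.id_apply]
  -- mapping a submodule by `ρ (g₁ * g₂)` is mapping twice
  have hmap_mul : ∀ (g₁ g₂ : G) (V : Submodule k (Fin m → k)),
      Submodule.map (Matrix.mulVecLin ((ρ (g₁ * g₂) : Matrix (Fin m) (Fin m) k))) V
        = Submodule.map (Matrix.mulVecLin ((ρ g₁ : Matrix (Fin m) (Fin m) k)))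
            (Submodule.map (Matrix.mulVecLin ((ρ g₂ : Matrix (Fin m) (Fin m) k))) V) := by
    intro g₁ g₂ V
    rw [map_mul, Units.val_mul, Matrix.mulVecLin_mul, Submodule.map_comp]
  -- `W` is stable (not just invariant) under `H`
  have hmapW : ∀ h ∈ H,
      Submodule.map (Matrix.mulVecLin ((ρ h : Matrix (Fin m) (Fin m) k))) W = W := by
    intro h hh
    apply le_antisymm
    · rintro _ ⟨w, hw, rfl⟩
      exact hWinv h hh w hw
    · intro w hw
      refine ⟨Matrix.mulVecLin ((ρ h⁻¹ : Matrix (Fin m) (Fin m) k)) w,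
        hWinv h⁻¹ (inv_mem hh) w hw, ?_⟩
      simpa using hcancel h⁻¹ w
  -- each translate of `W` is nonzero
  have hfne : ∀ c : G ⧸ H, f c ≠ ⊥ := by
    intro c hc
    apply hWbot
    rw [eq_bot_iff]
    intro w hw
    have hmem : Matrix.mulVecLin ((ρ c.out : Matrix (Fin m) (Fin m) k)) w ∈ f c :=
      ⟨w, hw, rfl⟩
    rw [hc, Submodule.mem_bot] at hmem
    have : w = 0 := by
      have := congrArg (Matrix.mulVecLin ((ρ c.out⁻¹ : Matrix (Fin m) (Fin m) k))) hmem
      rwa [hcancel c.out w, map_zero] at this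
    simp [this]
  -- translates of `W` only depend on the coset
  have hF : ∀ (g : G) (c : G ⧸ H), (g : G ⧸ H) = c →
      Submodule.map (Matrix.mulVecLin ((ρ g : Matrix (Fin m) (Fin m) k))) W = f c := by
    intro g c hgc
    have hh : g⁻¹ * c.out ∈ H :=
      QuotientGroup.eq.mp (hgc.trans (QuotientGroup.out_eq' c).symm)
    have hrw : c.out = g * (g⁻¹ * c.out) := (mul_inv_cancel_left g c.out).symm
    show _ = Submodule.map (Matrix.mulVecLin ((ρ c.out : Matrix (Fin m) (Fin m) k))) W
    conv_rhs => rw [hrw]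
    rw [hmap_mul, hmapW _ hh]
  -- the kernel of `ρ` is contained in the normal core of `H`
  have hker : ∀ x : G, ρ x = 1 → x ∈ H.normalCore := by
    intro x hx
    show ∀ b : G, b * x * b⁻¹ ∈ H
    intro b
    have hρxinv : ρ x⁻¹ = 1 := by rw [map_inv, hx, inv_one]
    have hfd : f ((x⁻¹ * b⁻¹ : G) : G ⧸ H) = f ((b⁻¹ : G) : G ⧸ H) := by
      rw [← hF (x⁻¹ * b⁻¹) _ rfl, ← hF b⁻¹ _ rfl, map_mul, hρxinv, one_mul]
    have hdc : ((x⁻¹ * b⁻¹ : G) : G ⧸ H) = ((b⁻¹ : G) : G ⧸ H) := by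
      by_contra hne
      exact hfne _ ((hindep ((b⁻¹ : G) : G ⧸ H)).eq_bot_of_le
        (hfd ▸ le_iSup₂ (f := fun c _ => f c) ((x⁻¹ * b⁻¹ : G) : G ⧸ H) hne))
    have := QuotientGroup.eq.mp hdc
    simpa [mul_assoc] using this
  -- finiteness of the image of `ρ` on `I`
  have hfinI : Finite ↥(Subgroup.map ρ I) :=
    Nat.finite_of_card_ne_zero (by rw [hj]; exact (pow_pos hp.pos j).ne')
  -- finiteness of `G ⧸ H.normalCore`
  have hidx : H.normalCore.index ≠ 0 := by
    intro h0
    rw [h0] at hcop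
    exact hp.one_lt.ne' ((Nat.coprime_zero_left p).mp hcop)
  have hfinQ : Finite (G ⧸ H.normalCore) := Nat.finite_of_card_ne_zero hidx
  intro g hg
  -- `(ρ g) ^ (p ^ j) = 1`
  have hpow : ρ (g ^ p ^ j) = 1 := by
    have h1 : (⟨ρ g, Subgroup.mem_map_of_mem ρ hg⟩ : ↥(Subgroup.map ρ I)) ^ p ^ j = 1 := by
      rw [← hj]; exact pow_card_eq_one'
    have := congrArg Subtype.val h1
    simpa [map_pow] using this
  have hgN : g ^ p ^ j ∈ H.normalCore := hker _ hpow
  -- pass to the quotient `G ⧸ H.normalCore`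
  have hq1 : ((g : G ⧸ H.normalCore)) ^ p ^ j = 1 := by
    rw [← QuotientGroup.mk_pow]
    exact (QuotientGroup.eq_one_iff _).mpr hgN
  have hq2 : ((g : G ⧸ H.normalCore)) ^ H.normalCore.index = 1 := pow_card_eq_one'
  have hd : orderOf ((g : G ⧸ H.normalCore)) ∣ 1 := by
    have hcop' : Nat.Coprime H.normalCore.index (p ^ j) := hcop.pow_right j
    exact hcop' ▸ Nat.dvd_gcd (orderOf_dvd_of_pow_eq_one hq2) (orderOf_dvd_of_pow_eq_one hq1)
  have hgcore : g ∈ H.normalCore := by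
    have : ((g : G ⧸ H.normalCore)) = 1 :=
      orderOf_eq_one_iff.mp (Nat.dvd_one.mp hd)
    exact (QuotientGroup.eq_one_iff _).mp this
  exact H.normalCore_le hgcore
end

section
/- Let G be a group and let V, W be free modules of finite positive rank over an Artinian local k-algebra 𝒜 equipped with 𝒜-linear G-actions. If the diagonal action of G on V ⊗_𝒜 W is trivial, then G acts on each of V and W by scalars (elements of 𝒜^×). -/
/-!
If `f ⊗ h = id` on `M ⊗ N` for free modules with bases `b`, `c`, comparing coordinates of
`f (b i) ⊗ h (c j) = b i ⊗ c j` gives `a_{li} d_{mj} = δ_{il} δ_{jm}` for the matrices `a` of `f`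
and `d` of `h`. With `j = m` fixed this says `d_{jj} a = 1`, so `a` is the scalar matrix `d_{jj}⁻¹`,
and symmetrically `d` is scalar. Applied to `f = ρV g`, `h = ρW g` this is the theorem.
-/

open TensorProduct

namespace Module.Basis

variable {R M : Type*} [CommRing R] [AddCommGroup M] [Module R M]

theorem eq_smul_id_of_mul_repr_eq {ι : Type*} [DecidableEq ι] (b : Basis ι R M)
    (f : M →ₗ[R] M) {r s : R} (hsr : s * r = 1)
    (H : ∀ i l, r * b.repr (f (b i)) l = if i = l then 1 else 0) :
    f = s • LinearMap.id := by
  refine b.ext fun i => b.repr.injective <| Finsupp.ext fun l => ?_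
  calc b.repr (f (b i)) l = s * (r * b.repr (f (b i)) l) := by rw [← mul_assoc, hsr, one_mul]
    _ = b.repr ((s • LinearMap.id : M →ₗ[R] M) (b i)) l := by
      simp [H, Finsupp.single_apply]

variable {N : Type*} [AddCommGroup N] [Module R N]

theorem repr_mul_repr_of_map_eq_id {ι κ : Type*} [DecidableEq ι] [DecidableEq κ]
    (b : Basis ι R M) (c : Basis κ R N) {f : M →ₗ[R] M} {h : N →ₗ[R] N}
    (hfh : TensorProduct.map f h = LinearMap.id) (i l : ι) (j m : κ) :
    b.repr (f (b i)) l * c.repr (h (c j)) m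
      = if i = l then (if j = m then 1 else 0) else 0 := by
  have := congrArg (fun x => (b.tensorProduct c).repr x (l, m))
    (LinearMap.congr_fun hfh (b i ⊗ₜ c j))
  simp only [map_tmul, LinearMap.id_apply,
    tensorProduct_repr_tmul_apply, repr_self, smul_eq_mul] at this
  rw [mul_comm, this, Finsupp.single_apply, Finsupp.single_apply]
  split_ifs <;> simp

end Module.Basis

theorem TensorProduct.exists_unit_eq_smul_id_of_map_eq_id {R M N : Type*} [CommRing R]
    [AddCommGroup M] [Module R M] [Module.Free R M] [Nontrivial M]
    [AddCommGroup N] [Module R N] [Module.Free R N] [Nontrivial N]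
    {f : M →ₗ[R] M} {h : N →ₗ[R] N} (hfh : TensorProduct.map f h = LinearMap.id) :
    ∃ u : Rˣ, f = (u : R) • LinearMap.id ∧ h = ((u⁻¹ : Rˣ) : R) • LinearMap.id := by
  classical
  let b := Module.Free.chooseBasis R M
  let c := Module.Free.chooseBasis R N
  obtain ⟨i₀⟩ := b.index_nonempty
  obtain ⟨j₀⟩ := c.index_nonempty
  have key := b.repr_mul_repr_of_map_eq_id c hfh
  have hdiag : b.repr (f (b i₀)) i₀ * c.repr (h (c j₀)) j₀ = 1 := by simpa using key i₀ i₀ j₀ j₀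
  let u : Rˣ := ⟨_, _, hdiag, by rw [mul_comm, hdiag]⟩
  refine ⟨u, b.eq_smul_id_of_mul_repr_eq f u.mul_inv fun i l => ?_,
    c.eq_smul_id_of_mul_repr_eq h u.inv_mul fun j m => ?_⟩
  · rw [mul_comm]
    exact (key i l j₀ j₀).trans (by simp)
  · exact (key i₀ i₀ j m).trans (by simp)

theorem stmt_16_general
    {𝒜 G V W : Type*} [CommRing 𝒜]
    [Group G]
    [AddCommGroup V] [Module 𝒜 V] [Module.Free 𝒜 V] [Nontrivial V]
    [AddCommGroup W] [Module 𝒜 W] [Module.Free 𝒜 W] [Nontrivial W]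
    (ρV : Representation 𝒜 G V) (ρW : Representation 𝒜 G W)
    (htriv : ∀ g : G, (ρV.tprod ρW) g = LinearMap.id) :
    (∀ g : G, ∃ u : 𝒜ˣ, ∀ v : V, ρV g v = (u : 𝒜) • v) ∧
    (∀ g : G, ∃ u : 𝒜ˣ, ∀ w : W, ρW g w = (u : 𝒜) • w) := by
  have hscalar g := TensorProduct.exists_unit_eq_smul_id_of_map_eq_id (htriv g)
  refine ⟨fun g => ?_, fun g => ?_⟩
  · obtain ⟨u, hu, -⟩ := hscalar g
    exact ⟨u, fun v => LinearMap.congr_fun hu v⟩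
  · obtain ⟨u, -, hu⟩ := hscalar g
    exact ⟨u⁻¹, fun w => LinearMap.congr_fun hu w⟩

/-- Let `G` be a group and `V`, `W` free modules of finite positive rank over an Artinian
local `k`-algebra `𝒜`, equipped with `𝒜`-linear `G`-actions.  If the diagonal action of `G`
on `V ⊗[𝒜] W` is trivial, then `G` acts on each of `V` and `W` by scalars (units of `𝒜`). -/
theorem stmt_16
    {k 𝒜 G V W : Type*} [Field k] [CommRing 𝒜] [Algebra k 𝒜]
    [IsArtinianRing 𝒜] [IsLocalRing 𝒜] [Group G]
    [AddCommGroup V] [Module 𝒜 V] [Module.Free 𝒜 V] [Module.Finite 𝒜 V] [Nontrivial V]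
    [AddCommGroup W] [Module 𝒜 W] [Module.Free 𝒜 W] [Module.Finite 𝒜 W] [Nontrivial W]
    (ρV : Representation 𝒜 G V) (ρW : Representation 𝒜 G W)
    (htriv : ∀ g : G, (ρV.tprod ρW) g = LinearMap.id) :
    (∀ g : G, ∃ u : 𝒜ˣ, ∀ v : V, ρV g v = (u : 𝒜) • v) ∧
    (∀ g : G, ∃ u : 𝒜ˣ, ∀ w : W, ρW g w = (u : 𝒜) • w) :=
  stmt_16_general ρV ρW htriv
end

section
/- Let G be a group with an index-2 subgroup H, and let V be a finite-dimensional representation of H over a field of characteristic zero. Then there is a natural isomorphism of G-representations ad(TensorInd_H^G V) ≅ 𝟙 ⊕ Ind_H^G ad⁰(V) ⊕ TensorInd_H^G ad⁰(V), where TensorInd denotes tensor induction, ad(W) = End(W) and ad⁰(W) denotes trace-zero endomorphisms. In particular, if V has dimension > 1 (so ad⁰(V) ≠ 0), the image of G acting on ad(TensorInd_H^G V) surjects onto G/H, and hence any group acting on ad of a tensor-induced representation has nontrivial component-style quotient of order 2. -/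
/-!
In characteristic zero `End V = k ⊕ ad⁰ V`, split by the projection `p = (tr / dim V) • 1`, so
`End V ⊗ End V` is the direct sum of the images of the complete orthogonal idempotents `p ⊗ p`,
`(1 - p) ⊗ p + p ⊗ (1 - p)` and `(1 - p) ⊗ (1 - p)`. Through `End U ≅ End V ⊗ End V`, elements of
`H` act by conjugation as `ad a ⊗ ad b` and the other elements as `(ad a ⊗ ad b) ∘ swap`. Since
conjugation commutes with `p`, every element of `G` commutes with the three idempotents, while the
swap exchanges `(1 - p) ⊗ p` and `p ⊗ (1 - p)`: an element outside `H` maps the summand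
`ad⁰ V ⊗ 1` into the complementary `1 ⊗ ad⁰ V`, so it acts nontrivially once `ad⁰ V ≠ 0`.
-/

open TensorProduct

theorem OrthogonalIdempotents.map_pair {S T F : Type*} [Semiring S] [Semiring T] [FunLike F S T]
    [RingHomClass F S T] (f : F) {a b : S} (h : OrthogonalIdempotents ![a, b]) :
    OrthogonalIdempotents ![f a, f b] := by
  convert h.map (f : S →+* T) using 1
  ext i
  fin_cases i <;> rfl

section Idempotents

variable {R M : Type*} [Ring R] [AddCommGroup M] [Module R M]

theorem SemiconjBy.apply_mem_range {a P Q : Module.End R M} (h : SemiconjBy a P Q) {x : M}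
    (hx : x ∈ LinearMap.range P) : a x ∈ LinearMap.range Q := by
  obtain ⟨y, rfl⟩ := hx
  exact ⟨a y, congr($h.symm y)⟩

theorem OrthogonalIdempotents.iSupIndep_range {ι : Type*} {p : ι → Module.End R M}
    (hp : OrthogonalIdempotents p) : iSupIndep fun i ↦ LinearMap.range (p i) := fun i ↦
  (LinearMap.IsIdempotentElem.isCompl (hp.idem i)).disjoint.mono_right <| iSup₂_le fun _ hj ↦
    LinearMap.range_le_ker_iff.mpr (hp.ortho (Ne.symm hj))

theorem CompleteOrthogonalIdempotents.iSup_range_eq_top {ι : Type*} [Fintype ι]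
    {p : ι → Module.End R M} (hp : CompleteOrthogonalIdempotents p) :
    ⨆ i, LinearMap.range (p i) = ⊤ := by
  refine eq_top_iff.mpr fun x _ ↦ ?_
  rw [← Module.End.one_apply (R := R) x, ← hp.complete, LinearMap.sum_apply]
  exact Submodule.sum_mem _ fun i _ ↦ Submodule.mem_iSup_of_mem i ⟨x, rfl⟩

theorem OrthogonalIdempotents.range_add {e : Fin 2 → Module.End R M}
    (he : OrthogonalIdempotents e) :
    LinearMap.range (e 0 + e 1) = LinearMap.range (e 0) ⊔ LinearMap.range (e 1) := by
  refine le_antisymm (LinearMap.range_add_le _ _) (sup_le ?_ ?_)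
  · rintro _ ⟨x, rfl⟩
    exact ⟨e 0 x, by rw [LinearMap.add_apply, ← Module.End.mul_apply, ← Module.End.mul_apply,
      he.idem 0, he.ortho (by decide), LinearMap.zero_apply, add_zero]⟩
  · rintro _ ⟨x, rfl⟩
    exact ⟨e 1 x, by rw [LinearMap.add_apply, ← Module.End.mul_apply, ← Module.End.mul_apply,
      he.idem 1, he.ortho (by decide), LinearMap.zero_apply, zero_add]⟩

theorem exists_apply_ne_self_of_disjoint {A B : Submodule R M} (hAB : Disjoint A B) (hA : A ≠ ⊥)
    {f : Module.End R M} (hf : ∀ x ∈ A, f x ∈ B) : ∃ x, f x ≠ x := by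
  obtain ⟨x, hx, hx0⟩ := Submodule.exists_mem_ne_zero_of_ne_bot hA
  exact ⟨x, fun hfx ↦ hx0 (Submodule.disjoint_def.mp hAB x hx (hfx ▸ hf x hx))⟩

end Idempotents

theorem Submodule.finrank_sup_of_disjoint {K V : Type*} [DivisionRing K] [AddCommGroup V]
    [Module K V] {A B : Submodule K V} [FiniteDimensional K A] [FiniteDimensional K B]
    (h : Disjoint A B) : Module.finrank K ↥(A ⊔ B) = Module.finrank K A + Module.finrank K B := by
  rw [← Submodule.finrank_sup_add_finrank_inf_eq, h.eq_bot, finrank_bot, add_zero]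

section Conj

variable {R M N : Type*} [CommRing R] [AddCommGroup M] [Module R M] [AddCommGroup N] [Module R N]

theorem LinearEquiv.eq_conjAlgEquiv_of_comp_eq (e : M ≃ₗ[R] N) {a : Module.End R N}
    {x : Module.End R M} (h : a ∘ₗ e.toLinearMap = e.toLinearMap ∘ₗ x) :
    a = e.conjAlgEquiv R x := by
  ext y
  simpa using congr($h (e.symm y))

theorem LinearEquiv.range_conjAlgEquiv (e : M ≃ₗ[R] N) (f : Module.End R M) :
    LinearMap.range (e.conjAlgEquiv R f) = (LinearMap.range f).map e.toLinearMap := by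
  rw [LinearEquiv.conjAlgEquiv_apply, LinearMap.range_comp,
    LinearMap.range_comp_of_range_eq_top _ e.symm.range]

theorem LinearEquiv.finrank_range_conjAlgEquiv (e : M ≃ₗ[R] N) (f : Module.End R M) :
    Module.finrank R (LinearMap.range (e.conjAlgEquiv R f)) =
      Module.finrank R (LinearMap.range f) := by
  rw [e.range_conjAlgEquiv, LinearEquiv.finrank_map_eq]

end Conj

section TensorSquare

variable {R M : Type*} [CommRing R] [AddCommGroup M] [Module R M]

theorem TensorProduct.commute_map {a b f g : Module.End R M} (ha : Commute a f)
    (hb : Commute b g) : Commute (map a b) (map f g) := by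
  simp only [Commute, SemiconjBy, ← TensorProduct.map_mul, ha.eq, hb.eq]

theorem TensorProduct.semiconjBy_map_mul_comm {a b f g : Module.End R M} (ha : Commute a g)
    (hb : Commute b f) :
    SemiconjBy (map a b * (TensorProduct.comm R M M).toLinearMap) (map f g) (map g f) := by
  have hcomm : (TensorProduct.comm R M M).toLinearMap * map f g =
      map g f * (TensorProduct.comm R M M).toLinearMap :=
    (map_comp_comm_eq g f).symm
  rw [SemiconjBy, mul_assoc, hcomm, ← mul_assoc, ← mul_assoc, (commute_map ha hb).eq]

variable {p : Module.End R M}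

theorem orthogonalIdempotents_map_one_sub (hp : IsIdempotentElem p) :
    OrthogonalIdempotents ![map (1 - p) p, map p (1 - p)] := by
  refine ⟨fun i ↦ ?_, fun i j hij ↦ ?_⟩ <;> fin_cases i <;> try fin_cases j
  all_goals simp_all [IsIdempotentElem, ← TensorProduct.map_mul, hp.eq, hp.one_sub.eq,
    hp.mul_one_sub_self, hp.one_sub_mul_self]

/-- The `i`-th component has `i` tensor factors in `ker p`. -/
def tensorSquareProj (p : Module.End R M) : Fin 3 → Module.End R (M ⊗[R] M) :=
  ![map p p, map (1 - p) p + map p (1 - p), map (1 - p) (1 - p)]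

theorem completeOrthogonalIdempotents_tensorSquareProj (hp : IsIdempotentElem p) :
    CompleteOrthogonalIdempotents (tensorSquareProj p) := by
  refine ⟨⟨fun i ↦ ?_, fun i j hij ↦ ?_⟩, ?_⟩
  · fin_cases i <;> simp [tensorSquareProj, IsIdempotentElem, add_mul, mul_add,
      ← TensorProduct.map_mul, hp.eq, hp.one_sub.eq, hp.mul_one_sub_self, hp.one_sub_mul_self]
  · fin_cases i <;> fin_cases j <;> simp_all [tensorSquareProj, add_mul, mul_add,
      ← TensorProduct.map_mul, hp.eq, hp.mul_one_sub_self, hp.one_sub_mul_self]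
  · rw [Fin.sum_univ_three, ← TensorProduct.map_one, ← add_sub_cancel p 1, map_add_left,
      map_add_right, map_add_right]
    change map p p + (map (1 - p) p + map p (1 - p)) + map (1 - p) (1 - p) = _
    abel

end TensorSquare

theorem TensorProduct.finrank_range_map {K M N P Q : Type*} [Field K] [AddCommGroup M]
    [Module K M] [AddCommGroup N] [Module K N] [AddCommGroup P] [Module K P] [AddCommGroup Q]
    [Module K Q] (f : M →ₗ[K] P) (g : N →ₗ[K] Q) :
    Module.finrank K (LinearMap.range (map f g)) =
      Module.finrank K (LinearMap.range f) * Module.finrank K (LinearMap.range g) := by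
  have hfac : map f g = mapIncl (LinearMap.range f) (LinearMap.range g) ∘ₗ
      map f.rangeRestrict g.rangeRestrict := by
    rw [← map_comp]; rfl
  rw [hfac, LinearMap.range_comp_of_range_eq_top _ (LinearMap.range_eq_top.mpr
      (map_surjective f.surjective_rangeRestrict g.surjective_rangeRestrict)),
    LinearMap.finrank_range_of_inj (map_injective_of_flat_flat _ _
      (Submodule.injective_subtype _) (Submodule.injective_subtype _)),
    Module.finrank_tensorProduct]

section Representation

variable {k G V : Type*} [CommRing k] [Group G] [AddCommGroup V] [Module k V]
  (ρ : Representation k G V)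

theorem Representation.linHom_apply_one (g : G) : ρ.linHom ρ g 1 = 1 := by
  ext; simp [Representation.linHom_apply]

theorem Representation.linHom_apply_of_mem_span_one (g : G) {f : Module.End k V}
    (hf : f ∈ Submodule.span k {1}) : ρ.linHom ρ g f = f := by
  obtain ⟨c, rfl⟩ := Submodule.mem_span_singleton.mp hf
  rw [map_smul, ρ.linHom_apply_one]

theorem Representation.trace_linHom_apply (g : G) (f : Module.End k V) :
    LinearMap.trace k V (ρ.linHom ρ g f) = LinearMap.trace k V f := by
  change LinearMap.trace k V (ρ g * (f * ρ g⁻¹)) = _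
  rw [LinearMap.trace_mul_comm, mul_assoc, ← map_mul, inv_mul_cancel, map_one, mul_one]

theorem Representation.linHom_apply_eq_of_comp_eq {g : G} {F F' : Module.End k V}
    (h : ρ g ∘ₗ F = F' ∘ₗ ρ g) : ρ.linHom ρ g F = F' := by
  ext v
  simp [Representation.linHom_apply, ← LinearMap.comp_apply (ρ g) F, h]

end Representation

section ScalarProj

variable {k V : Type*} [Field k] [AddCommGroup V] [Module k V]

variable (k V) in
noncomputable def scalarProj : Module.End k (Module.End k V) :=
  ((Module.finrank k V : k)⁻¹ • LinearMap.trace k V).smulRight 1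

theorem scalarProj_apply (f : Module.End k V) :
    scalarProj k V f = ((Module.finrank k V : k)⁻¹ * LinearMap.trace k V f) • 1 := rfl

theorem commute_linHom_scalarProj {G : Type*} [Group G] (ρ : Representation k G V) (g : G) :
    Commute (ρ.linHom ρ g) (scalarProj k V) := by
  ext f : 1
  simp only [Module.End.mul_apply, scalarProj_apply, map_smul, ρ.linHom_apply_one,
    ρ.trace_linHom_apply]

theorem commute_linHom_one_sub_scalarProj {G : Type*} [Group G] (ρ : Representation k G V)
    (g : G) : Commute (ρ.linHom ρ g) (1 - scalarProj k V) :=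
  (Commute.one_right _).sub_right (commute_linHom_scalarProj ρ g)

variable [FiniteDimensional k V] [CharZero k]

theorem scalarProj_one : scalarProj k V 1 = 1 := by
  rcases subsingleton_or_nontrivial V with hV | hV
  · exact Subsingleton.elim _ _
  · rw [scalarProj_apply, LinearMap.trace_one,
      inv_mul_cancel₀ (by simp [Module.finrank_pos.ne']), one_smul]

theorem isIdempotentElem_scalarProj : IsIdempotentElem (scalarProj k V) := by
  ext f : 1
  rw [Module.End.mul_apply, scalarProj_apply f, map_smul, scalarProj_one]

theorem ker_scalarProj :
    LinearMap.ker (scalarProj k V) = LinearMap.ker (LinearMap.trace k V) := by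
  rcases subsingleton_or_nontrivial V with hV | hV
  · exact Subsingleton.elim _ _
  · ext f
    simp [scalarProj_apply, Module.finrank_pos.ne']

theorem range_one_sub_scalarProj :
    LinearMap.range (1 - scalarProj k V) = LinearMap.ker (LinearMap.trace k V) := by
  rw [← LinearMap.IsIdempotentElem.ker_eq_range_one_sub isIdempotentElem_scalarProj,
    ker_scalarProj]

theorem finrank_ker_trace :
    Module.finrank k (LinearMap.ker (LinearMap.trace k V)) = Module.finrank k V ^ 2 - 1 := by
  have h := (LinearMap.trace k V).finrank_range_add_finrank_ker
  rw [Module.finrank_linearMap, ← sq] at h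
  rcases subsingleton_or_nontrivial V with hV | hV
  · rw [Module.finrank_zero_of_subsingleton (M := V)] at h ⊢
    omega
  · have hn : (Module.finrank k V : k) ≠ 0 := by simp [Module.finrank_pos.ne']
    have htop : LinearMap.range (LinearMap.trace k V) = ⊤ := LinearMap.range_eq_top.mpr fun c ↦
      ⟨(c * (Module.finrank k V : k)⁻¹) • 1, by simp [LinearMap.trace_one, hn]⟩
    rw [htop, finrank_top, Module.finrank_self] at h
    omega

theorem tmul_one_injective :
    Function.Injective ((TensorProduct.mk k (Module.End k V) (Module.End k V)).flip 1) := by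
  intro f g hfg
  have hscalar : ∀ f : Module.End k V,
      (Module.finrank k V : k)⁻¹ • (Module.finrank k V : k) • f = f := by
    have h1 := scalarProj_one (k := k) (V := V)
    rw [scalarProj_apply, LinearMap.trace_one] at h1
    intro f
    rw [smul_smul, ← mul_one f, ← mul_smul_comm, h1]
  simpa [hscalar] using congr(TensorProduct.rid k _
    (LinearMap.lTensor _ ((Module.finrank k V : k)⁻¹ • LinearMap.trace k V) $hfg))

theorem range_map_scalarProj :
    LinearMap.range (map (scalarProj k V) (scalarProj k V)) = Submodule.span k {1 ⊗ₜ[k] 1} := by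
  rw [range_map_eq_span_tmul]
  refine le_antisymm (Submodule.span_le.mpr ?_) (Submodule.span_le.mpr ?_)
  · rintro _ ⟨f, g, rfl⟩
    rw [scalarProj_apply, scalarProj_apply, smul_tmul_smul]
    exact Submodule.smul_mem _ _ (Submodule.mem_span_singleton_self _)
  · rintro _ rfl
    exact Submodule.subset_span ⟨1, 1, by rw [scalarProj_one]⟩

theorem range_map_one_sub_scalarProj :
    LinearMap.range (map (1 - scalarProj k V) (scalarProj k V)) =
      (LinearMap.ker (LinearMap.trace k V)).map
        ((TensorProduct.mk k (Module.End k V) (Module.End k V)).flip 1) := by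
  rw [range_map_eq_span_tmul, ← range_one_sub_scalarProj]
  refine le_antisymm (Submodule.span_le.mpr ?_) ?_
  · rintro _ ⟨f, g, rfl⟩
    refine ⟨_, Submodule.smul_mem _ ((Module.finrank k V : k)⁻¹ * LinearMap.trace k V g)
      (LinearMap.mem_range_self _ f), ?_⟩
    rw [scalarProj_apply g, tmul_smul, smul_tmul']
    rfl
  · rintro _ ⟨_, ⟨f, rfl⟩, rfl⟩
    refine Submodule.subset_span ⟨f, 1, ?_⟩
    rw [scalarProj_one]
    rfl

theorem finrank_range_map_one_sub_scalarProj :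
    Module.finrank k (LinearMap.range (map (1 - scalarProj k V) (scalarProj k V))) =
      Module.finrank k V ^ 2 - 1 := by
  rw [range_map_one_sub_scalarProj,
    ← (Submodule.equivMapOfInjective _ tmul_one_injective _).finrank_eq, finrank_ker_trace]

theorem finrank_range_map_scalarProj_one_sub :
    Module.finrank k (LinearMap.range (map (scalarProj k V) (1 - scalarProj k V))) =
      Module.finrank k V ^ 2 - 1 := by
  rw [TensorProduct.finrank_range_map, mul_comm, ← TensorProduct.finrank_range_map,
    finrank_range_map_one_sub_scalarProj]

theorem finrank_range_map_one_sub_one_sub :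
    Module.finrank k (LinearMap.range (map (1 - scalarProj k V) (1 - scalarProj k V))) =
      (Module.finrank k V ^ 2 - 1) ^ 2 := by
  rw [TensorProduct.finrank_range_map, range_one_sub_scalarProj, finrank_ker_trace, ← sq]

end ScalarProj

section TensorInduction

variable {k G V X : Type*} [Field k] [Group G] [AddCommGroup V] [Module k V]
  [AddCommGroup X] [Module k X]

/-- Through `Ψ`, elements `h ∈ H` act as `ad h ⊗ ad b` and elements outside `H` as
`(ad a ⊗ ad b) ∘ swap`: the shape of the conjugation action on `End` of a tensor induction. -/
structure IsTensorInd (H : Subgroup G) (ρV : Representation k H V) (ρ : Representation k G X)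
    (Ψ : Module.End k V ⊗[k] Module.End k V ≃ₗ[k] X) : Prop where
  mem : ∀ h (hh : h ∈ H), ∃ b : H,
    ρ h = Ψ.conjAlgEquiv k (map (ρV.linHom ρV ⟨h, hh⟩) (ρV.linHom ρV b))
  not_mem : ∀ g ∉ H, ∃ a b : H,
    ρ g = Ψ.conjAlgEquiv k
      (map (ρV.linHom ρV a) (ρV.linHom ρV b) * (TensorProduct.comm k _ _).toLinearMap)

namespace IsTensorInd

variable {H : Subgroup G} {ρV : Representation k H V} {ρ : Representation k G X}
  {Ψ : Module.End k V ⊗[k] Module.End k V ≃ₗ[k] X} {f f' : Module.End k (Module.End k V)}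

theorem commute_map (hρ : IsTensorInd H ρV ρ Ψ) (hf : ∀ c, Commute (ρV.linHom ρV c) f)
    (hf' : ∀ c, Commute (ρV.linHom ρV c) f') {h : G} (hh : h ∈ H) :
    Commute (ρ h) (Ψ.conjAlgEquiv k (map f f')) := by
  obtain ⟨b, hb⟩ := hρ.mem h hh
  rw [hb]
  exact (TensorProduct.commute_map (hf _) (hf' b)).map _

theorem semiconjBy_map (hρ : IsTensorInd H ρV ρ Ψ) (hf : ∀ c, Commute (ρV.linHom ρV c) f)
    (hf' : ∀ c, Commute (ρV.linHom ρV c) f') {g : G} (hg : g ∉ H) :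
    SemiconjBy (ρ g) (Ψ.conjAlgEquiv k (map f f')) (Ψ.conjAlgEquiv k (map f' f)) := by
  obtain ⟨a, b, hab⟩ := hρ.not_mem g hg
  rw [hab]
  exact (TensorProduct.semiconjBy_map_mul_comm (hf' a) (hf b)).map _

theorem commute_tensorSquareProj (hρ : IsTensorInd H ρV ρ Ψ) (g : G) (i : Fin 3) :
    Commute (ρ g) (Ψ.conjAlgEquiv k (tensorSquareProj (scalarProj k V) i)) := by
  have hp := commute_linHom_scalarProj ρV
  have hq := commute_linHom_one_sub_scalarProj ρV
  by_cases hg : g ∈ H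
  · fin_cases i
    · exact hρ.commute_map hp hp hg
    · change Commute _ (Ψ.conjAlgEquiv k (_ + _))
      rw [map_add]
      exact (hρ.commute_map hq hp hg).add_right (hρ.commute_map hp hq hg)
    · exact hρ.commute_map hq hq hg
  · fin_cases i
    · exact hρ.semiconjBy_map hp hp hg
    · change SemiconjBy _ (Ψ.conjAlgEquiv k (_ + _)) (Ψ.conjAlgEquiv k (_ + _))
      rw [map_add]
      nth_rewrite 2 [add_comm]
      exact (hρ.semiconjBy_map hq hp hg).add_right (hρ.semiconjBy_map hp hq hg)
    · exact hρ.semiconjBy_map hq hq hg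

theorem apply_tmul_one (hρ : IsTensorInd H ρV ρ Ψ) {h : G} (hh : h ∈ H) (f : Module.End k V) :
    ρ h (Ψ (f ⊗ₜ 1)) = Ψ (ρV.linHom ρV ⟨h, hh⟩ f ⊗ₜ 1) := by
  obtain ⟨b, hb⟩ := hρ.mem h hh
  rw [hb, LinearEquiv.conjAlgEquiv_apply]
  simp only [LinearMap.comp_apply, LinearEquiv.coe_coe, LinearEquiv.symm_apply_apply, map_tmul,
    Representation.linHom_apply_one]

theorem exists_linearEquiv_ker_trace [FiniteDimensional k V] [CharZero k]
    (hρ : IsTensorInd H ρV ρ Ψ) :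
    ∃ e : LinearMap.range (Ψ.conjAlgEquiv k (map (1 - scalarProj k V) (scalarProj k V))) ≃ₗ[k]
        LinearMap.ker (LinearMap.trace k V),
      ∀ (h : G) (hh : h ∈ H)
        (f : LinearMap.range (Ψ.conjAlgEquiv k (map (1 - scalarProj k V) (scalarProj k V))))
        (hf : ρ h f ∈
          LinearMap.range (Ψ.conjAlgEquiv k (map (1 - scalarProj k V) (scalarProj k V)))),
        (e ⟨ρ h f, hf⟩ : Module.End k V) = ρV.linHom ρV ⟨h, hh⟩ (e f) := by
  set S := LinearMap.ker (LinearMap.trace k V)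
  let j : S →ₗ[k] X := Ψ.toLinearMap ∘ₗ (TensorProduct.mk k _ _).flip 1 ∘ₗ S.subtype
  have hj : Function.Injective j :=
    Ψ.injective.comp (tmul_one_injective.comp S.injective_subtype)
  have hjA : LinearMap.range j =
      LinearMap.range (Ψ.conjAlgEquiv k (map (1 - scalarProj k V) (scalarProj k V))) := by
    rw [LinearEquiv.range_conjAlgEquiv, range_map_one_sub_scalarProj, LinearMap.range_comp,
      LinearMap.range_comp, Submodule.range_subtype]
  let e := (LinearEquiv.ofEq _ _ hjA.symm).trans (LinearEquiv.ofInjective j hj).symm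
  have hje : ∀ x, j (e x) = x := fun x ↦ LinearEquiv.ofInjective_symm_apply (h := hj) j _
  refine ⟨e, fun h hh f hf ↦ ?_⟩
  have hS : ρV.linHom ρV ⟨h, hh⟩ (e f) ∈ S := by
    rw [LinearMap.mem_ker, ρV.trace_linHom_apply]
    exact (e f).2
  have hjρ : j ⟨_, hS⟩ = ρ h f :=
    (hρ.apply_tmul_one hh _).symm.trans (congrArg (ρ h) (hje f))
  exact congr(Subtype.val $(hj ((hje ⟨ρ h f, hf⟩).trans hjρ.symm)))

end IsTensorInd

end TensorInduction

section EndTensorEquiv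

variable {k G K V U : Type*} [Field k] [Group G] [Group K] [AddCommGroup V] [Module k V]
  [FiniteDimensional k V] [AddCommGroup U] [Module k U]

noncomputable def endTensorEquiv (T : U ≃ₗ[k] V ⊗[k] V) :
    Module.End k V ⊗[k] Module.End k V ≃ₗ[k] Module.End k U :=
  (homTensorHomEquiv k V V V V).trans T.symm.conj

variable (T : U ≃ₗ[k] V ⊗[k] V)

theorem endTensorEquiv_tmul (f g : Module.End k V) :
    endTensorEquiv T (f ⊗ₜ g) = T.symm.toLinearMap ∘ₗ map f g ∘ₗ T.toLinearMap := by
  ext; simp [endTensorEquiv]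

theorem endTensorEquiv_one_tmul_one : endTensorEquiv T (1 ⊗ₜ 1) = 1 := by
  ext; simp [endTensorEquiv_tmul]

variable {ρV : Representation k K V} {ρW : Representation k G U}

theorem linHom_eq_conjAlgEquiv_map {g : G} {a b : K}
    (hg : ∀ u, T (ρW g u) = map (ρV a) (ρV b) (T u)) :
    ρW.linHom ρW g = (endTensorEquiv T).conjAlgEquiv k
      (map (ρV.linHom ρV a) (ρV.linHom ρV b)) := by
  refine LinearEquiv.eq_conjAlgEquiv_of_comp_eq _ (TensorProduct.ext' fun f f' ↦
    ρW.linHom_apply_eq_of_comp_eq ?_)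
  ext u
  apply T.injective
  simp only [map_tmul, endTensorEquiv_tmul, LinearMap.comp_apply, LinearEquiv.coe_coe,
    LinearEquiv.apply_symm_apply, hg]
  induction T u using TensorProduct.induction_on with
  | zero => simp
  | tmul v w => simp [Representation.linHom_apply]
  | add y y' hy hy' => simp only [map_add, hy, hy']

theorem linHom_eq_conjAlgEquiv_map_comm {g : G} {a : K}
    (hg : ∀ v w, T (ρW g (T.symm (v ⊗ₜ w))) = ρV a w ⊗ₜ v) :
    ρW.linHom ρW g = (endTensorEquiv T).conjAlgEquiv k
      (map (ρV.linHom ρV a) 1 * (TensorProduct.comm k _ _).toLinearMap) := by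
  refine LinearEquiv.eq_conjAlgEquiv_of_comp_eq _ (TensorProduct.ext' fun f f' ↦
    ρW.linHom_apply_eq_of_comp_eq ?_)
  ext u
  apply T.injective
  obtain ⟨y, rfl⟩ := T.symm.surjective u
  simp only [Module.End.mul_apply, LinearEquiv.coe_coe, comm_tmul, map_tmul, endTensorEquiv_tmul,
    LinearMap.comp_apply, LinearEquiv.apply_symm_apply]
  induction y using TensorProduct.induction_on with
  | zero => simp
  | tmul v w => simp [Representation.linHom_apply, hg]
  | add y y' hy hy' => simp only [map_add, hy, hy']

theorem isTensorInd_endTensorEquiv {H : Subgroup G} (hH : H.index = 2)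
    {ρV : Representation k H V} {σ : G} (hσ : σ ∉ H)
    (hmem : ∀ h (hh : h ∈ H), ∃ b : H,
      ∀ u, T (ρW h u) = map (ρV ⟨h, hh⟩) (ρV b) (T u))
    (hσT : ∃ a : H, ∀ v w, T (ρW σ (T.symm (v ⊗ₜ w))) = ρV a w ⊗ₜ v) :
    IsTensorInd H ρV (ρW.linHom ρW) (endTensorEquiv T) := by
  have hmem' : ∀ h (hh : h ∈ H), ∃ b : H, ρW.linHom ρW h = (endTensorEquiv T).conjAlgEquiv k
      (map (ρV.linHom ρV ⟨h, hh⟩) (ρV.linHom ρV b)) :=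
    fun h hh ↦ (hmem h hh).imp fun _ hb ↦ linHom_eq_conjAlgEquiv_map T hb
  refine ⟨hmem', fun g hg ↦ ?_⟩
  have hgσ : g * σ⁻¹ ∈ H :=
    (Subgroup.mul_mem_iff_of_index_two hH).mpr (iff_of_false hg (by simpa using hσ))
  obtain ⟨b, hb⟩ := hmem' _ hgσ
  obtain ⟨a, ha⟩ := hσT
  refine ⟨⟨_, hgσ⟩ * a, b, ?_⟩
  calc ρW.linHom ρW g = ρW.linHom ρW (g * σ⁻¹) * ρW.linHom ρW σ := by
        rw [← map_mul, inv_mul_cancel_right]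
    _ = _ := by
      rw [hb, linHom_eq_conjAlgEquiv_map_comm T ha, ← map_mul, ← mul_assoc,
        ← TensorProduct.map_mul, mul_one, ← map_mul (ρV.linHom ρV)]

theorem range_conjAlgEquiv_map_scalarProj [CharZero k] :
    LinearMap.range ((endTensorEquiv T).conjAlgEquiv k (map (scalarProj k V) (scalarProj k V))) =
      Submodule.span k {1} := by
  rw [LinearEquiv.range_conjAlgEquiv, range_map_scalarProj, Submodule.map_span,
    Set.image_singleton, LinearEquiv.coe_coe, endTensorEquiv_one_tmul_one]

end EndTensorEquiv

/-- Let `G` be a group with an index-2 subgroup `H`, `V` a finite-dimensional representation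
of `H` over a field of characteristic zero, and `W` the tensor induction
`TensorInd_H^G V` of `V` to `G` (characterized by an isomorphism `T : W ≅ V ⊗ V` satisfying
`h · (v ⊗ w) = hv ⊗ (σ⁻¹hσ)w` for `h ∈ H` and `σ · (v ⊗ w) = (σ²w) ⊗ v` for a fixed
`σ ∈ G \ H`).  Then there is a decomposition of `G`-representations
`ad(W) ≅ 𝟙 ⊕ Ind_H^G ad⁰(V) ⊕ TensorInd_H^G ad⁰(V)`:
`End(W)` is an internal direct sum of invariant subspaces `E₀ ⊕ E₁ ⊕ E₂` where `E₀` is the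
line spanned by the identity with trivial `G`-action, `E₁` is induced from an
`H`-subrepresentation isomorphic to `ad⁰(V)` (so has dimension `2(n²-1)`), and `E₂` has
dimension `(n²-1)²`, where `n = dim V`.  In particular, if `dim V > 1`, the image of `G`
acting on `ad(W)` surjects onto `G/H`: every `g ∉ H` acts nontrivially on `End(W)`. -/
theorem stmt_17
    {k G V U : Type*} [Field k] [CharZero k] [Group G]
    (H : Subgroup G) (hH : H.index = 2)
    [AddCommGroup V] [Module k V] [FiniteDimensional k V]
    [AddCommGroup U] [Module k U] [FiniteDimensional k U]
    (ρV : Representation k ↥H V)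
    (ρW : Representation k G U)
    (σ : G) (hσ : σ ∉ H) (hσ2 : σ ^ 2 ∈ H)
    (T : U ≃ₗ[k] V ⊗[k] V)
    (hT1 : ∀ (h : G) (hh : h ∈ H) (u : U),
      T (ρW h u) = TensorProduct.map (ρV ⟨h, hh⟩)
        (ρV ⟨σ⁻¹ * h * σ, by
          simp only [Subgroup.mul_mem_iff_of_index_two hH, Subgroup.inv_mem_iff]
          tauto⟩) (T u))
    (hT2 : ∀ v w : V, T (ρW σ (T.symm (v ⊗ₜ[k] w))) = (ρV ⟨σ ^ 2, hσ2⟩ w) ⊗ₜ[k] v) :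
    ∃ E : Fin 3 → Submodule k (Module.End k U),
      -- internal direct sum decomposition of `ad(W) = End(W)`
      iSupIndep E ∧ (⨆ i, E i) = ⊤ ∧
      -- each summand is `G`-invariant for the conjugation action
      (∀ i (g : G), ∀ f ∈ E i, (ρW g) ∘ₗ f ∘ₗ (ρW g⁻¹) ∈ E i) ∧
      -- `E 0` is the trivial representation `𝟙`, spanned by the identity
      E 0 = Submodule.span k {(LinearMap.id : Module.End k U)} ∧
      (∀ g : G, ∀ f ∈ E 0, (ρW g) ∘ₗ f ∘ₗ (ρW g⁻¹) = f) ∧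
      -- `E 1 ≅ Ind_H^G ad⁰(V)`: it is the direct sum of an `H`-invariant subspace `A`
      -- (H-isomorphic to `ad⁰(V)`) and its translate `B`, swapped by any `g ∉ H`
      (∃ A B : Submodule k (Module.End k U), A ⊔ B = E 1 ∧ A ⊓ B = ⊥ ∧
        (∃ hA : ∀ (h : G), h ∈ H → ∀ f ∈ A, (ρW h) ∘ₗ f ∘ₗ (ρW h⁻¹) ∈ A,
          (∀ (h : G), h ∈ H → ∀ f ∈ B, (ρW h) ∘ₗ f ∘ₗ (ρW h⁻¹) ∈ B) ∧
          (∀ g ∉ H, ∀ f ∈ A, (ρW g) ∘ₗ f ∘ₗ (ρW g⁻¹) ∈ B) ∧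
          (∀ g ∉ H, ∀ f ∈ B, (ρW g) ∘ₗ f ∘ₗ (ρW g⁻¹) ∈ A) ∧
          -- `A` is `H`-isomorphic to `ad⁰(V)`, the trace-zero endomorphisms of `V`
          ∃ e : ↥A ≃ₗ[k] ↥(LinearMap.ker (LinearMap.trace k V)),
            ∀ (h : G) (hh : h ∈ H) (f : Module.End k U) (hf : f ∈ A),
              ((e ⟨(ρW h) ∘ₗ f ∘ₗ (ρW h⁻¹), hA h hh f hf⟩ : Module.End k V)) =
                (ρV ⟨h, hh⟩) ∘ₗ ((e ⟨f, hf⟩ : Module.End k V)) ∘ₗ (ρV ⟨h, hh⟩⁻¹))) ∧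
      -- dimensions: `dim E 1 = 2(n²-1)` and `dim E 2 = (n²-1)²` with `n = dim V`
      Module.finrank k (E 1) = 2 * (Module.finrank k V ^ 2 - 1) ∧
      Module.finrank k (E 2) = (Module.finrank k V ^ 2 - 1) ^ 2 ∧
      -- in particular the image of `G` on `ad(W)` surjects onto `G/H`
      (1 < Module.finrank k V →
        ∀ g ∉ H, ∃ f : Module.End k U, (ρW g) ∘ₗ f ∘ₗ (ρW g⁻¹) ≠ f) := by
  have hρ := isTensorInd_endTensorEquiv T hH hσ (fun h hh ↦ ⟨_, hT1 h hh⟩) ⟨_, hT2⟩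
  set Ψ := (endTensorEquiv T).conjAlgEquiv k
  set p := scalarProj k V
  have hp : IsIdempotentElem p := isIdempotentElem_scalarProj
  have hpc := commute_linHom_scalarProj ρV
  have hqc := commute_linHom_one_sub_scalarProj ρV
  have hE : CompleteOrthogonalIdempotents fun i ↦ Ψ (tensorSquareProj p i) :=
    (completeOrthogonalIdempotents_tensorSquareProj hp).map Ψ.toAlgHom.toRingHom
  have hAB := (orthogonalIdempotents_map_one_sub hp).map_pair Ψ
  set A := LinearMap.range (Ψ (map (1 - p) p))
  set B := LinearMap.range (Ψ (map p (1 - p)))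
  have hdisj : Disjoint A B := hAB.iSupIndep_range.pairwiseDisjoint (by decide : (0 : Fin 2) ≠ 1)
  have hsup : A ⊔ B = LinearMap.range (Ψ (tensorSquareProj p 1)) := by
    rw [show tensorSquareProj p 1 = map (1 - p) p + map p (1 - p) from rfl, map_add]
    exact hAB.range_add.symm
  have hA : Module.finrank k A = Module.finrank k V ^ 2 - 1 :=
    ((endTensorEquiv T).finrank_range_conjAlgEquiv _).trans finrank_range_map_one_sub_scalarProj
  have hB : Module.finrank k B = Module.finrank k V ^ 2 - 1 :=
    ((endTensorEquiv T).finrank_range_conjAlgEquiv _).trans finrank_range_map_scalarProj_one_sub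
  have hE0 : LinearMap.range (Ψ (tensorSquareProj p 0)) = Submodule.span k {1} :=
    range_conjAlgEquiv_map_scalarProj T
  obtain ⟨e, he⟩ := hρ.exists_linearEquiv_ker_trace
  refine ⟨fun i ↦ LinearMap.range (Ψ (tensorSquareProj p i)), hE.1.iSupIndep_range,
    hE.iSup_range_eq_top,
    fun i g f hf ↦ SemiconjBy.apply_mem_range (hρ.commute_tensorSquareProj g i) hf, hE0,
    fun g f hf ↦ ρW.linHom_apply_of_mem_span_one g (hE0 ▸ hf), ⟨A, B, hsup, hdisj.eq_bot,
      fun h hh f hf ↦ SemiconjBy.apply_mem_range (hρ.commute_map hqc hpc hh) hf,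
      fun h hh f hf ↦ SemiconjBy.apply_mem_range (hρ.commute_map hpc hqc hh) hf,
      fun g hg f hf ↦ SemiconjBy.apply_mem_range (hρ.semiconjBy_map hqc hpc hg) hf,
      fun g hg f hf ↦ SemiconjBy.apply_mem_range (hρ.semiconjBy_map hpc hqc hg) hf,
      e, fun h hh f hf ↦ he h hh ⟨f, hf⟩ _⟩, ?_,
    ((endTensorEquiv T).finrank_range_conjAlgEquiv _).trans finrank_range_map_one_sub_one_sub,
    fun hn g hg ↦ exists_apply_ne_self_of_disjoint hdisj (fun hbot ↦ ?_)
      fun f hf ↦ SemiconjBy.apply_mem_range (hρ.semiconjBy_map hqc hpc hg) hf⟩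
  · beta_reduce
    rw [← hsup, Submodule.finrank_sup_of_disjoint hdisj, hA, hB, two_mul]
  · rw [hbot, finrank_bot] at hA
    have := Nat.pow_lt_pow_left hn two_ne_zero
    omega
end
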